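/- Let x = Σ_v x_v e_v be a nonzero element of Cl(n) supported on a set W of vertices (x_v = 0 for v ∉ W) with xS = √n·x, where S = e_1 + ⋯ + e_n. If v_0 is a vertex maximizing |x_{v_0}|, then the number of neighbours of v_0 lying in W is at least √n. -/

import Mathlib

open scoped BigOperators

/-- `Cl n`: the real Clifford algebra of the standard positive definite quadratic form on `ℝⁿ`. -/
noncomputable abbrev Cl (n : ℕ) : Type :=
  CliffordAlgebra (QuadraticMap.weightedSumSquares ℝ (fun _ : Fin n => (1 : ℝ)))

/-- The orthonormal generators `e i` of `Cl n`, satisfying `e i ^ 2 = 1`, `e i * e j = - e j * e i`. -/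
noncomputable def e (n : ℕ) (i : Fin n) : Cl n :=
  CliffordAlgebra.ι _ (Pi.single i 1)

/-- `S = e 1 + ⋯ + e n`. -/
noncomputable def S (n : ℕ) : Cl n := ∑ i, e n i


/-- The basis element of `Cl n` corresponding to a vertex `v ∈ {0,1}ⁿ`:
the product of the `e i` with `v i = true`, in increasing order of `i`. -/
noncomputable def eVert (n : ℕ) (v : Fin n → Bool) : Cl n :=
  (((List.finRange n).filter (fun i => v i)).map (e n)).prod


lemma e_sq (n : ℕ) (i : Fin n) : e n i * e n i = 1 := by
  rw [e, CliffordAlgebra.ι_sq_scalar]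
  rw [QuadraticMap.weightedSumSquares_apply]
  simp [Pi.single_apply]

lemma e_anticomm (n : ℕ) {i j : Fin n} (h : i ≠ j) :
    e n i * e n j = -(e n j * e n i) := by
  rw [e, e, CliffordAlgebra.ι_mul_ι_comm_of_isOrtho]
  rw [QuadraticMap.isOrtho_def]
  rw [QuadraticMap.weightedSumSquares_apply, QuadraticMap.weightedSumSquares_apply,
    QuadraticMap.weightedSumSquares_apply]
  have : ∀ k : Fin n, (((Pi.single i (1:ℝ) : Fin n → ℝ) + (Pi.single j (1:ℝ) : Fin n → ℝ)) k)^2 = ((Pi.single i (1:ℝ) : Fin n → ℝ) k)^2 + ((Pi.single j (1:ℝ) : Fin n → ℝ) k)^2 := by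
    intro k
    rcases eq_or_ne k i with rfl|hi <;> rcases eq_or_ne k j with rfl|hj <;>
      simp_all [Pi.single_apply]
  simp only [Pi.add_apply] at this
  simp only [one_smul, ← Finset.sum_add_distrib]
  refine Finset.sum_congr rfl fun k _ => ?_
  simpa [sq] using this k

/-- sign: (-1)^{#{j < i : u j}} -/
noncomputable def sgn {n : ℕ} (u : Fin n → Bool) (i : Fin n) : ℝ :=
  (-1) ^ (∑ j : Fin n, if j < i ∧ u j then 1 else 0 : ℕ)

lemma sgn_mul_self {n : ℕ} (u : Fin n → Bool) (i : Fin n) : sgn u i * sgn u i = 1 := by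
  rw [sgn, ← pow_add, ← two_mul, pow_mul]
  norm_num

lemma sgn_update_of_not_lt {n : ℕ} (u : Fin n → Bool) {k i : Fin n} (hk : ¬ k < i) (b : Bool) :
    sgn (Function.update u k b) i = sgn u i := by
  unfold sgn
  congr 1
  refine Finset.sum_congr rfl fun j _ => ?_
  rcases eq_or_ne j k with rfl | hj
  · simp [hk]
  · simp [Function.update_of_ne hj]

lemma sgn_update_flip {n : ℕ} (u : Fin n → Bool) {k i : Fin n} (hk : k < i) :
    sgn (Function.update u k (!u k)) i = - sgn u i := by
  unfold sgn
  have hfun : (fun j : Fin n => (if j < i ∧ Function.update u k (!u k) j then 1 else 0 : ℕ))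
      = Function.update (fun j : Fin n => (if j < i ∧ u j then 1 else 0 : ℕ)) k
        (if k < i ∧ !u k then 1 else 0) := by
    funext j
    rcases eq_or_ne j k with rfl | hj
    · simp
    · simp [Function.update_of_ne hj]
  rw [hfun, Finset.sum_update_of_mem (Finset.mem_univ k),
    ← Finset.add_sum_erase _ _ (Finset.mem_univ k)]
  cases hu : u k <;> simp [hk, hu, pow_add, pow_succ, Finset.erase_eq]

/-- flip operator on functions on the cube -/
noncomputable def fOp {n : ℕ} (i : Fin n) :
    ((Fin n → Bool) → ℝ) →ₗ[ℝ] ((Fin n → Bool) → ℝ) where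
  toFun g := fun u => sgn u i * g (Function.update u i (!u i))
  map_add' g₁ g₂ := by funext u; simp [mul_add]
  map_smul' r g := by funext u; simp [smul_eq_mul]; ring

lemma cube_flip_flip {n : ℕ} (u : Fin n → Bool) (i : Fin n) :
    Function.update (Function.update u i (!u i)) i (!(Function.update u i (!u i)) i) = u := by
  simp [Function.update_idem]

lemma fOp_fOp {n : ℕ} (i : Fin n) (g : (Fin n → Bool) → ℝ) (u : Fin n → Bool) :
    fOp i (fOp i g) u = g u := by
  simp only [fOp, LinearMap.coe_mk, AddHom.coe_mk]
  rw [sgn_update_of_not_lt u (lt_irrefl i) (!u i), cube_flip_flip, ← mul_assoc, sgn_mul_self, one_mul]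

lemma fOp_anticomm {n : ℕ} {i j : Fin n} (h : i < j) (g : (Fin n → Bool) → ℝ)
    (u : Fin n → Bool) : fOp i (fOp j g) u = - fOp j (fOp i g) u := by
  simp only [fOp, LinearMap.coe_mk, AddHom.coe_mk]
  have hij : i ≠ j := ne_of_lt h
  rw [Function.update_of_ne hij.symm, Function.update_of_ne hij,
    Function.update_comm hij.symm,
    sgn_update_of_not_lt u (fun hc => absurd (lt_trans h hc) (lt_irrefl i)) (!u j),
    sgn_update_flip u h]
  ring

lemma fOp_mul_self {n : ℕ} (i : Fin n) :
    (fOp i * fOp i : Module.End ℝ ((Fin n → Bool) → ℝ)) = 1 :=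
  LinearMap.ext fun g => funext fun u => fOp_fOp i g u

lemma fOp_mul_anticomm {n : ℕ} {i j : Fin n} (h : i ≠ j) :
    (fOp i * fOp j : Module.End ℝ ((Fin n → Bool) → ℝ)) = -(fOp j * fOp i) := by
  rcases h.lt_or_gt with h' | h'
  · exact LinearMap.ext fun g => funext fun u => fOp_anticomm h' g u
  · refine LinearMap.ext fun g => funext fun u => ?_
    have := fOp_anticomm h' g u
    simp only [Module.End.mul_apply, LinearMap.neg_apply, Pi.neg_apply] at this ⊢
    linarith

noncomputable def Fgen (n : ℕ) : (Fin n → ℝ) →ₗ[ℝ] Module.End ℝ ((Fin n → Bool) → ℝ) :=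
  ∑ i : Fin n, (LinearMap.proj i).smulRight (fOp i)

lemma Fgen_apply (n : ℕ) (m : Fin n → ℝ) : Fgen n m = ∑ i : Fin n, m i • fOp i := by
  simp [Fgen]

lemma Fgen_sq (n : ℕ) (m : Fin n → ℝ) :
    Fgen n m * Fgen n m
      = algebraMap ℝ (Module.End ℝ ((Fin n → Bool) → ℝ))
          (QuadraticMap.weightedSumSquares ℝ (fun _ : Fin n => (1:ℝ)) m) := by
  have expand : Fgen n m * Fgen n m
      = ∑ i : Fin n, ∑ j : Fin n, (m i * m j) • (fOp i * fOp j : Module.End ℝ _) := by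
    rw [Fgen_apply, Finset.sum_mul_sum]
    simp_rw [smul_mul_smul_comm]
  have hT : ∀ i j : Fin n, (m i * m j) • (fOp i * fOp j : Module.End ℝ ((Fin n → Bool) → ℝ))
      + (m j * m i) • (fOp j * fOp i) = if i = j then (2 * (m i * m i)) • 1 else 0 := by
    intro i j
    rcases eq_or_ne i j with rfl | h
    · simp [fOp_mul_self, two_mul, add_smul]
    · rw [fOp_mul_anticomm h, if_neg h, mul_comm (m j) (m i), smul_neg, neg_add_cancel]
  have h2 : (2:ℝ) • (Fgen n m * Fgen n m)
      = (2:ℝ) • ∑ i : Fin n, (m i * m i) • (1 : Module.End ℝ ((Fin n → Bool) → ℝ)) := by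
    have swap : (∑ i : Fin n, ∑ j : Fin n, (m i * m j) • (fOp i * fOp j : Module.End ℝ _))
        = ∑ i : Fin n, ∑ j : Fin n, (m j * m i) • (fOp j * fOp i : Module.End ℝ _) :=
      Finset.sum_comm
    rw [two_smul, two_smul]
    nth_rewrite 2 [expand]
    rw [expand]
    nth_rewrite 2 [swap]
    rw [← Finset.sum_add_distrib]
    simp_rw [← Finset.sum_add_distrib]
    calc (∑ i : Fin n, ∑ j : Fin n,
          ((m i * m j) • (fOp i * fOp j : Module.End ℝ _) + (m j * m i) • (fOp j * fOp i)))
        = ∑ i : Fin n, ∑ j : Fin n,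
            (if i = j then (2 * (m i * m i)) • (1 : Module.End ℝ ((Fin n → Bool) → ℝ)) else 0) := by
          refine Finset.sum_congr rfl fun i _ => Finset.sum_congr rfl fun j _ => hT i j
      _ = ∑ i : Fin n, (2 * (m i * m i)) • (1 : Module.End ℝ ((Fin n → Bool) → ℝ)) := by
          refine Finset.sum_congr rfl fun i _ => ?_
          simp
      _ = _ := by
          simp_rw [two_mul, add_smul]
  have h3 := smul_right_injective (Module.End ℝ ((Fin n → Bool) → ℝ)) (two_ne_zero' ℝ) h2
  rw [h3, Algebra.algebraMap_eq_smul_one, QuadraticMap.weightedSumSquares_apply]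
  simp [Finset.sum_smul]

/-- The representation of `Cl n` on functions on the cube. -/
noncomputable def rep (n : ℕ) : Cl n →ₐ[ℝ] Module.End ℝ ((Fin n → Bool) → ℝ) :=
  CliffordAlgebra.lift _ ⟨Fgen n, Fgen_sq n⟩

lemma rep_e (n : ℕ) (i : Fin n) : rep n (e n i) = fOp i := by
  rw [rep, e, CliffordAlgebra.lift_ι_apply, Fgen_apply]
  rw [Finset.sum_eq_single i]
  · simp
  · intro j _ hj; simp [Pi.single_apply, hj]
  · intro h; exact absurd (Finset.mem_univ i) h

/-- delta function at a vertex -/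
noncomputable def dl {n : ℕ} (v : Fin n → Bool) : (Fin n → Bool) → ℝ := Pi.single v 1

lemma fOp_dl {n : ℕ} (i : Fin n) (v : Fin n → Bool) :
    fOp i (dl v) = sgn v i • dl (Function.update v i (!v i)) := by
  funext u
  simp only [fOp, LinearMap.coe_mk, AddHom.coe_mk, dl, Pi.smul_apply, smul_eq_mul,
    Pi.single_apply]
  rcases eq_or_ne u (Function.update v i (!v i)) with rfl | hu
  · rw [if_pos (cube_flip_flip v i), if_pos rfl, sgn_update_of_not_lt v (lt_irrefl i) (!v i)]
  · rw [if_neg hu, mul_zero, if_neg, mul_zero]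
    intro hc
    apply hu
    rw [← hc]
    exact (cube_flip_flip u i).symm

lemma prod_fOp_dl {n : ℕ} (l : List (Fin n)) (hl : l.Pairwise (· < ·)) :
    ((l.map (fun i => (fOp i : Module.End ℝ ((Fin n → Bool) → ℝ)))).prod)
      (dl (fun _ => false)) = dl (fun j => decide (j ∈ l)) := by
  induction l with
  | nil => simp [dl]
  | cons i l' ih =>
    rw [List.pairwise_cons] at hl
    have hmem : i ∉ l' := fun hc => lt_irrefl i (hl.1 i hc)
    rw [List.map_cons, List.prod_cons, Module.End.mul_apply, ih hl.2, fOp_dl]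
    have hsgn : sgn (fun j => decide (j ∈ l')) i = 1 := by
      rw [sgn]
      have : (∑ j : Fin n, if j < i ∧ decide (j ∈ l') then 1 else 0 : ℕ) = 0 := by
        refine Finset.sum_eq_zero fun j _ => ?_
        rw [if_neg]
        rintro ⟨hj1, hj2⟩
        exact absurd (hl.1 j (by simpa using hj2)) (asymm hj1)
      rw [this, pow_zero]
    rw [hsgn, one_smul]
    have hv : Function.update (fun j => decide (j ∈ l')) i (!decide (i ∈ l'))
        = fun j => decide (j ∈ i :: l') := by
      funext j
      rcases eq_or_ne j i with rfl | hj
      · simp [hmem]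
      · simp [Function.update_of_ne hj, hj]
    rw [hv]

lemma rep_eVert (n : ℕ) (v : Fin n → Bool) :
    rep n (eVert n v) (dl (fun _ => false)) = dl v := by
  rw [eVert, map_list_prod, List.map_map]
  have h1 : (rep n) ∘ (e n) = fun i => (fOp i : Module.End ℝ ((Fin n → Bool) → ℝ)) := by
    funext i; exact rep_e n i
  rw [h1, prod_fOp_dl _ (((List.pairwise_lt_finRange n).filter _))]
  have h2 : (fun j => decide (j ∈ (List.finRange n).filter (fun i => v i))) = v := by
    funext j
    by_cases hj : v j = true <;> simp [List.mem_filter, hj]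
  rw [h2]

lemma orderedInsert_of_forall_le {n : ℕ} (i : Fin n) (l : List (Fin n))
    (h : ∀ b ∈ l, i ≤ b) : l.orderedInsert (· ≤ ·) i = i :: l := by
  cases l with
  | nil => rfl
  | cons b t => rw [List.orderedInsert, if_pos (h b List.mem_cons_self)]

lemma prod_mul_e {n : ℕ} (l : List (Fin n)) (hl : l.Pairwise (· < ·)) (i : Fin n) :
    ∃ s : ℝ, (s = 1 ∨ s = -1) ∧
      (l.map (e n)).prod * e n i =
        s • (if i ∈ l then ((l.erase i).map (e n)).prod
             else ((l.orderedInsert (· ≤ ·) i).map (e n)).prod) := by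
  induction l with
  | nil =>
    refine ⟨1, Or.inl rfl, ?_⟩
    simp [List.orderedInsert]
  | cons a l' ih =>
    rw [List.pairwise_cons] at hl
    obtain ⟨s, hs, hIH⟩ := ih hl.2
    rcases lt_trichotomy i a with hia | rfl | hia
    · -- i < a, so i smaller than everything
      have hnm : i ∉ l' := fun hc => absurd (hl.1 i hc) (asymm hia)
      have hcons : (a :: l').orderedInsert (· ≤ ·) i = i :: a :: l' :=
        orderedInsert_of_forall_le i _ (by
          intro b hb
          rcases List.mem_cons.1 hb with rfl | hb
          · exact le_of_lt hia
          · exact le_of_lt (lt_trans hia (hl.1 b hb)))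
      rw [if_neg hnm, orderedInsert_of_forall_le i l'
        (fun b hb => le_of_lt (lt_trans hia (hl.1 b hb)))] at hIH
      refine ⟨-s, by rcases hs with rfl | rfl <;> simp, ?_⟩
      rw [if_neg (by simp [hnm, ne_of_lt hia]), hcons, List.map_cons, List.prod_cons,
        mul_assoc, hIH, mul_smul_comm, List.map_cons, List.prod_cons, ← mul_assoc,
        e_anticomm (n := n) (ne_of_gt hia), List.map_cons, List.prod_cons, List.map_cons, List.prod_cons]
      simp [mul_assoc]
    · -- i = a
      have hnm : i ∉ l' := fun hc => lt_irrefl i (hl.1 i hc)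
      rw [if_neg hnm, orderedInsert_of_forall_le i l'
        (fun b hb => le_of_lt (hl.1 b hb))] at hIH
      refine ⟨s, hs, ?_⟩
      rw [if_pos List.mem_cons_self, List.erase_cons_head, List.map_cons,
        List.prod_cons, mul_assoc, hIH, mul_smul_comm, List.map_cons, List.prod_cons,
        ← mul_assoc, e_sq, one_mul]
    · -- a < i
      have hai : a ≠ i := ne_of_lt hia
      refine ⟨s, hs, ?_⟩
      rw [List.map_cons, List.prod_cons, mul_assoc, hIH, mul_smul_comm]
      by_cases hm : i ∈ l'
      · rw [if_pos hm, if_pos (List.mem_cons_of_mem a hm),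
          List.erase_cons_tail, List.map_cons, List.prod_cons]
        simp [hai]
      · rw [if_neg hm, if_neg (by simp [hm, hai.symm]),
          List.orderedInsert, if_neg (by simpa using hia), List.map_cons, List.prod_cons]

lemma eVert_mul_e (n : ℕ) (v : Fin n → Bool) (i : Fin n) :
    ∃ s : ℝ, (s = 1 ∨ s = -1) ∧
      eVert n v * e n i = s • eVert n (Function.update v i (!v i)) := by
  set l := (List.finRange n).filter (fun j => v j) with hldef
  have hl : l.Pairwise (· < ·) := (List.pairwise_lt_finRange n).filter _
  have hnd : l.Nodup := (List.nodup_finRange n).filter _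
  obtain ⟨s, hs, h⟩ := prod_mul_e l hl i
  refine ⟨s, hs, ?_⟩
  rw [eVert, ← hldef, h]
  by_cases hv : v i = true
  · have hm : i ∈ l := by simp [hldef, List.mem_filter, hv]
    have key : l.erase i
        = (List.finRange n).filter (fun j => Function.update v i (!v i) j) := by
      rw [hnd.erase_eq_filter, hldef, List.filter_filter]
      refine List.filter_congr fun j _ => ?_
      rcases eq_or_ne j i with rfl | hj
      · simp [hv]
      · simp [Function.update_of_ne hj, hj]
    rw [if_pos hm, eVert, key]
  · have hm : i ∉ l := by simp [hldef, List.mem_filter, hv]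
    have key : l.orderedInsert (· ≤ ·) i
        = (List.finRange n).filter (fun j => Function.update v i (!v i) j) := by
      refine List.Perm.eq_of_pairwise' (r := (· ≤ ·))
        (List.Pairwise.orderedInsert i l (hl.imp le_of_lt))
        (((List.pairwise_lt_finRange n).filter _).imp le_of_lt) ?_
      refine (List.perm_orderedInsert _ i l).trans ?_
      rw [List.perm_ext_iff_of_nodup (by simp [hm, hnd]) ((List.nodup_finRange n).filter _)]
      intro j
      rcases eq_or_ne j i with rfl | hj
      · simp [List.mem_filter, hv]
      · simp [List.mem_filter, hj, hldef, Function.update_of_ne hj]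
    rw [if_neg hm, eVert, key]

noncomputable def coefAt (n : ℕ) (u : Fin n → Bool) : Cl n →ₗ[ℝ] ℝ where
  toFun x := rep n x (dl (fun _ => false)) u
  map_add' x y := by simp
  map_smul' r x := by simp

lemma coefAt_eVert (n : ℕ) (u v : Fin n → Bool) :
    coefAt n u (eVert n v) = if u = v then 1 else 0 := by
  rw [coefAt, LinearMap.coe_mk, AddHom.coe_mk, rep_eVert, dl, Pi.single_apply]


/-- If `x = Σ_{w ∈ W} x_w e_w` is nonzero with `xS = √n·x`, and `v₀` maximizes `|x_{v₀}|`,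
then `v₀` has at least `√n` neighbours in `W`. -/
theorem maximizer_has_large_degree (n : ℕ) (W : Finset (Fin n → Bool))
    (c : (Fin n → Bool) → ℝ) (hsupp : ∀ v ∉ W, c v = 0)
    (hx0 : (∑ v, c v • eVert n v) ≠ 0)
    (heig : (∑ v, c v • eVert n v) * S n = Real.sqrt n • ∑ v, c v • eVert n v)
    (v₀ : Fin n → Bool) (hmax : ∀ v, |c v| ≤ |c v₀|) :
    Real.sqrt n ≤
      ((Finset.univ.filter
        (fun i : Fin n => Function.update v₀ i (!v₀ i) ∈ W)).card : ℝ) := by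
  classical
  -- c v₀ ≠ 0
  have hc0 : c v₀ ≠ 0 := by
    intro h
    apply hx0
    refine Finset.sum_eq_zero fun v _ => ?_
    have hv := hmax v
    rw [h, abs_zero] at hv
    rw [abs_nonpos_iff.mp hv, zero_smul]
  choose sg hsg1 hsg2 using eVert_mul_e n
  set N : Fin n → (Fin n → Bool) := fun i => Function.update v₀ i (!v₀ i) with hN
  -- rewrite x * S
  have hXS : (∑ v, c v • eVert n v) * S n
      = ∑ v : Fin n → Bool, ∑ i : Fin n,
          (c v * sg v i) • eVert n (Function.update v i (!v i)) := by
    rw [S, Finset.sum_mul]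
    refine Finset.sum_congr rfl fun v _ => ?_
    rw [Finset.mul_sum]
    refine Finset.sum_congr rfl fun i _ => ?_
    rw [smul_mul_assoc, hsg2 v i, smul_smul]
  rw [hXS] at heig
  have happ := congrArg (coefAt n v₀) heig
  rw [map_sum, map_smul, map_sum] at happ
  simp_rw [map_sum, map_smul, coefAt_eVert, smul_eq_mul] at happ
  have hL : (∑ v : Fin n → Bool, ∑ i : Fin n,
      (c v * sg v i) * (if v₀ = Function.update v i (!v i) then 1 else 0))
      = ∑ i : Fin n, sg (N i) i * c (N i) := by
    rw [Finset.sum_comm]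
    refine Finset.sum_congr rfl fun i _ => ?_
    have hiff : ∀ v : Fin n → Bool,
        (v₀ = Function.update v i (!v i)) ↔ v = N i := by
      intro v
      constructor
      · intro h
        rw [hN, h]
        exact (cube_flip_flip v i).symm
      · intro h
        rw [h, hN]
        exact (cube_flip_flip v₀ i).symm
    calc (∑ v : Fin n → Bool, (c v * sg v i) * (if v₀ = Function.update v i (!v i) then 1 else 0))
        = ∑ v : Fin n → Bool, (if v = N i then c v * sg v i else 0) := by
          refine Finset.sum_congr rfl fun v _ => ?_
          by_cases h : v = N i
          · rw [if_pos ((hiff v).mpr h), if_pos h, mul_one]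
          · rw [if_neg (fun hc => h ((hiff v).mp hc)), if_neg h, mul_zero]
      _ = c (N i) * sg (N i) i := by rw [Finset.sum_ite_eq']; exact if_pos (Finset.mem_univ _)
      _ = sg (N i) i * c (N i) := mul_comm _ _
  have hR : (∑ v : Fin n → Bool, c v * (if v₀ = v then 1 else 0)) = c v₀ := by
    calc (∑ v : Fin n → Bool, c v * (if v₀ = v then 1 else 0))
        = ∑ v : Fin n → Bool, (if v = v₀ then c v else 0) := by
          refine Finset.sum_congr rfl fun v _ => ?_
          by_cases h : v = v₀
          · rw [if_pos h.symm, if_pos h, mul_one]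
          · rw [if_neg (Ne.symm h), if_neg h, mul_zero]
      _ = c v₀ := by rw [Finset.sum_ite_eq']; exact if_pos (Finset.mem_univ _)
  rw [hL, hR] at happ
  -- now happ : ∑ i, sg (N i) i * c (N i) = √n * c v₀
  have hab : Real.sqrt n * |c v₀| ≤
      ∑ i ∈ Finset.univ.filter (fun i : Fin n => N i ∈ W), |c v₀| := by
    calc Real.sqrt n * |c v₀| = |Real.sqrt n * c v₀| := by
          rw [abs_mul, abs_of_nonneg (Real.sqrt_nonneg _)]
      _ = |∑ i : Fin n, sg (N i) i * c (N i)| := by rw [← happ]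
      _ ≤ ∑ i : Fin n, |sg (N i) i * c (N i)| := Finset.abs_sum_le_sum_abs _ _
      _ = ∑ i : Fin n, |c (N i)| := by
          refine Finset.sum_congr rfl fun i _ => ?_
          rw [abs_mul]
          rcases hsg1 (N i) i with h | h <;> rw [h] <;> norm_num
      _ = ∑ i ∈ Finset.univ.filter (fun i : Fin n => N i ∈ W), |c (N i)| := by
          rw [Finset.sum_filter_of_ne]
          intro i _ h
          by_contra hW
          exact h (by rw [hsupp _ hW, abs_zero])
      _ ≤ ∑ i ∈ Finset.univ.filter (fun i : Fin n => N i ∈ W), |c v₀| :=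
          Finset.sum_le_sum fun i _ => hmax (N i)
  rw [Finset.sum_const, nsmul_eq_mul] at hab
  have hpos : 0 < |c v₀| := abs_pos.mpr hc0
  exact le_of_mul_le_mul_right (by exact hab) hpos
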